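/- arXiv:1308.4822 — 5 statements merged into one kernel-verified Lean document; each statement's English description precedes it below -/
import Mathlib

section
/- Let (X,E) be a graph (E a reflexive binary relation on X). Then the relation ≤ on MPE(X,2) defined by φ ≤ ψ iff φ⁻¹(1) ⊆ ψ⁻¹(1) is a partial order, and (MPE(X,2), ≤) is a complete lattice; moreover, the infimum of any family {φ_i : i ∈ I} in this lattice is the unique element of MPE(X,2) whose preimage of 1 equals ⋂_{i∈I} φ_i⁻¹(1). -/
namespace CanExt

open Classical

/-- A partial map from `X` into the two-element chain `{0,1}` (encoded as `Bool`,
with `false` playing the role of `0` and `true` the role of `1`);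
`φ x = none` means `x` is outside the domain of `φ`. -/
abbrev PMap (X : Type*) := X → Option Bool

/-- The preimage of `1` of a partial map. -/
def pre1 {X : Type*} (φ : PMap X) : Set X := {x | φ x = some true}

/-- The preimage of `0` of a partial map. -/
def pre0 {X : Type*} (φ : PMap X) : Set X := {x | φ x = some false}

/-- A partial map is `E`-preserving if whenever `x, y` lie in its domain and
`(x,y) ∈ E`, then `φ x ≤ φ y`. -/
def EPres {X : Type*} (E : X → X → Prop) (φ : PMap X) : Prop :=
  ∀ ⦃x y : X⦄, E x y → ∀ ⦃a b : Bool⦄, φ x = some a → φ y = some b → a ≤ b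

/-- `PExt ψ φ` : the partial map `ψ` extends the partial map `φ`. -/
def PExt {X : Type*} (ψ φ : PMap X) : Prop :=
  ∀ ⦃x : X⦄ ⦃a : Bool⦄, φ x = some a → ψ x = some a

/-- The set of maximal partial `E`-preserving maps from `(X,E)` into the
two-element chain `2`. -/
def MPE {X : Type*} (E : X → X → Prop) : Set (PMap X) :=
  {φ | EPres E φ ∧ ∀ ψ : PMap X, EPres E ψ → PExt ψ φ → ψ = φ}

/-- A partial morphism from a graph with topology `(X,E,t)` to `2_τ`:
the preimages of `1` and `0` are `t`-closed (equivalently, the domain is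
closed and the restriction to the domain is continuous into discrete `2`),
and the map is `E`-preserving. -/
def PMorphT {X : Type*} (E : X → X → Prop) (t : TopologicalSpace X) (φ : PMap X) : Prop :=
  EPres E φ ∧ @IsClosed X t (pre1 φ) ∧ @IsClosed X t (pre0 φ)

/-- The set of maximal partial morphisms from `(X,E,t)` to `2_τ`. -/
def MPM {X : Type*} (E : X → X → Prop) (t : TopologicalSpace X) : Set (PMap X) :=
  {φ | PMorphT E t φ ∧ ∀ ψ : PMap X, PMorphT E t ψ → PExt ψ φ → ψ = φ}

/-- The relation `E` between partial maps on a lattice `L`: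
`(f,g) ∈ E` iff `f x ≤ g x` for all `x ∈ dom f ∩ dom g`. -/
def ErelP {L : Type*} (f g : PMap L) : Prop :=
  ∀ ⦃x : L⦄ ⦃a b : Bool⦄, f x = some a → g x = some b → a ≤ b

/-- `f ≤₁ g` iff `f⁻¹(1) ⊆ g⁻¹(1)`. -/
def le1 {L : Type*} (f g : PMap L) : Prop := pre1 f ⊆ pre1 g

/-- `f ≤₂ g` iff `f⁻¹(0) ⊆ g⁻¹(0)`. -/
def le2 {L : Type*} (f g : PMap L) : Prop := pre0 f ⊆ pre0 g

section Lat

variable (L : Type*) [Lattice L] [BoundedOrder L]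

/-- A partial homomorphism from a bounded lattice `L` to the two-element
bounded lattice `2_B`: its domain is a `{0,1}`-sublattice of `L` and the
restriction to the domain is a bounded-lattice homomorphism. -/
def PHom (f : PMap L) : Prop :=
  f ⊥ = some false ∧ f ⊤ = some true ∧
  ∀ ⦃a b : L⦄ ⦃x y : Bool⦄, f a = some x → f b = some y →
    f (a ⊓ b) = some (x ⊓ y) ∧ f (a ⊔ b) = some (x ⊔ y)

/-- The set of maximal partial homomorphisms (MPHs) from `L` to `2_B`. -/
def MPHset : Set (PMap L) := {f | PHom L f ∧ ∀ g : PMap L, PHom L g → PExt g f → g = f}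

/-- The underlying set of the graph `D♭(L)`. -/
abbrev MPHsub := {f : PMap L // f ∈ MPHset L}

/-- The relation `E` on `MPH(L, 2_B)`, giving the graph `D♭(L)`. -/
def EM (f g : MPHsub L) : Prop := ErelP f.1 g.1

/-- The evaluation map `e_a` on `MPH(L,2_B)` : `e_a(f) = f(a)` if `a ∈ dom f`. -/
def evalM (a : L) : PMap (MPHsub L) := fun f => f.1 a

/-- `V_a = {f ∈ MPH(L,2_B) : f(a) = 0}`. -/
def VaM (a : L) : Set (MPHsub L) := {f | f.1 a = some false}

/-- `W_a = {f ∈ MPH(L,2_B) : f(a) = 1}`. -/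
def WaM (a : L) : Set (MPHsub L) := {f | f.1 a = some true}

/-- The topology on `MPH(L,2_B)` with the sets `V_a`, `W_a` as a subbasis of
closed sets. -/
def tauM : TopologicalSpace (MPHsub L) :=
  TopologicalSpace.generateFrom {U | ∃ a : L, U = (VaM L a)ᶜ ∨ U = (WaM L a)ᶜ}

/-- A (nonempty) lattice filter. -/
def IsLatFilter (F : Set L) : Prop :=
  F.Nonempty ∧ (∀ ⦃a b : L⦄, a ∈ F → a ≤ b → b ∈ F) ∧
    (∀ ⦃a b : L⦄, a ∈ F → b ∈ F → a ⊓ b ∈ F)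

/-- A (nonempty) lattice ideal. -/
def IsLatIdeal (I : Set L) : Prop :=
  I.Nonempty ∧ (∀ ⦃a b : L⦄, a ∈ I → b ≤ a → b ∈ I) ∧
    (∀ ⦃a b : L⦄, a ∈ I → b ∈ I → a ⊔ b ∈ I)

/-- The set of special partial homomorphisms (SPHs) from `L` to `2_B`:
`f⁻¹(1)` is a nonempty filter, `f⁻¹(0)` is a nonempty ideal, and they are
disjoint. -/
def SPHset : Set (PMap L) :=
  {f | IsLatFilter L (pre1 f) ∧ IsLatIdeal L (pre0 f) ∧ Disjoint (pre1 f) (pre0 f)}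

/-- The underlying set of the graph `D̄♭(L)`. -/
abbrev SPHsub := {f : PMap L // f ∈ SPHset L}

/-- The relation `E` on `SPH(L, 2_B)`, giving the graph `D̄♭(L)`. -/
def ES (f g : SPHsub L) : Prop := ErelP f.1 g.1

/-- The evaluation map `ē_a` on `SPH(L,2_B)`. -/
def evalS (a : L) : PMap (SPHsub L) := fun f => f.1 a

/-- `V_a = {f ∈ SPH(L,2_B) : f(a) = 0}`. -/
def VaS (a : L) : Set (SPHsub L) := {f | f.1 a = some false}

/-- `W_a = {f ∈ SPH(L,2_B) : f(a) = 1}`. -/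
def WaS (a : L) : Set (SPHsub L) := {f | f.1 a = some true}

/-- The topology on `SPH(L,2_B)` with the sets `V_a`, `W_a` as a subbasis of
closed sets. -/
def tauS : TopologicalSpace (SPHsub L) :=
  TopologicalSpace.generateFrom {U | ∃ a : L, U = (VaS L a)ᶜ ∨ U = (WaS L a)ᶜ}

/-- The carrier of the completion built from `D♭(L)`. -/
abbrev CX := {φ : PMap (MPHsub L) // φ ∈ MPE (EM L)}

/-- The carrier of the completion built from `D̄♭(L)`. -/
abbrev CY := {φ : PMap (SPHsub L) // φ ∈ MPE (ES L)}

end Lat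

/-! A maximal partial `E`-preserving map `φ` is determined by the pair `(φ⁻¹(1), φ⁻¹(0))`, and
maximality says exactly that this pair is a formal concept of the complementary relation `Eᶜ`:
`φ⁻¹(0)` is the set of points receiving no edge from `φ⁻¹(1)`, and `φ⁻¹(1)` the set of points
sending no edge into `φ⁻¹(0)`. So `MPE(X,2)` is in bijection with the concept lattice of `Eᶜ`,
ordered by extents, whose infima have the intersection of the extents as extent. -/

section Concepts

variable {X : Type*} {E : X → X → Prop}

lemma EPres.update {φ : PMap X} (hφ : EPres E φ) {x : X} {b : Bool}
    (hin : ∀ ⦃y a⦄, E y x → φ y = some a → a ≤ b)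
    (hout : ∀ ⦃y a⦄, E x y → φ y = some a → b ≤ a) :
    EPres E (Function.update φ x (some b)) := by
  intro u v huv a c hu hv
  rw [Function.update_apply] at hu hv
  split_ifs at hu hv with hux hvx hvx
  · simp_all
  · subst hux
    exact Option.some_inj.1 hu ▸ hout huv hv
  · subst hvx
    exact Option.some_inj.1 hv ▸ hin huv hu
  · exact hφ huv hu hv

lemma apply_eq_of_update_of_mem_MPE {φ : PMap X} (hφ : φ ∈ MPE E) {x : X} {b : Bool}
    (hx : ∀ a, φ x = some a → a = b) (hpres : EPres E (Function.update φ x (some b))) :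
    φ x = some b := by
  have hext : PExt (Function.update φ x (some b)) φ := by
    intro y a hy
    rcases eq_or_ne y x with rfl | hyx
    · rw [Function.update_self, hx a hy]
    · rwa [Function.update_of_ne hyx]
  rw [← hφ.2 _ hpres hext, Function.update_self]

lemma upperPolar_pre1_of_mem_MPE (hE : Reflexive E) {φ : PMap X} (hφ : φ ∈ MPE E) :
    upperPolar Eᶜ (pre1 φ) = pre0 φ := by
  ext x
  refine ⟨fun hx => ?_, fun hx y hy hyx => absurd (hφ.1 hyx hy hx) (by decide)⟩
  refine apply_eq_of_update_of_mem_MPE hφ (fun a ha => ?_)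
    (hφ.1.update ?_ fun _ _ _ _ => Bool.false_le _)
  · cases a
    · rfl
    · exact absurd (hE x) (hx ha)
  · intro y a hyx hy
    cases a
    · exact le_rfl
    · exact absurd hyx (hx hy)

lemma lowerPolar_pre0_of_mem_MPE (hE : Reflexive E) {φ : PMap X} (hφ : φ ∈ MPE E) :
    lowerPolar Eᶜ (pre0 φ) = pre1 φ := by
  ext x
  refine ⟨fun hx => ?_, fun hx y hy hxy => absurd (hφ.1 hxy hx hy) (by decide)⟩
  refine apply_eq_of_update_of_mem_MPE hφ (fun a ha => ?_)
    (hφ.1.update (fun _ _ _ _ => Bool.le_true _) ?_)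
  · cases a
    · exact absurd (hE x) (hx ha)
    · rfl
  · intro y a hxy hy
    cases a
    · exact absurd hxy (hx hy)
    · exact le_rfl

theorem mem_MPE_iff (hE : Reflexive E) {φ : PMap X} :
    φ ∈ MPE E ↔ upperPolar Eᶜ (pre1 φ) = pre0 φ ∧ lowerPolar Eᶜ (pre0 φ) = pre1 φ := by
  refine ⟨fun hφ => ⟨upperPolar_pre1_of_mem_MPE hE hφ, lowerPolar_pre0_of_mem_MPE hE hφ⟩,
    fun ⟨h0, h1⟩ => ?_⟩
  have hpres : EPres E φ := by
    intro x y hxy a b hx hy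
    cases a <;> cases b
    · exact le_rfl
    · exact Bool.false_le _
    · exact absurd hxy ((h1.symm ▸ hx : x ∈ lowerPolar Eᶜ (pre0 φ)) hy)
    · exact le_rfl
  refine ⟨hpres, fun ψ hψ hext => funext fun x => ?_⟩
  rcases hφx : φ x with _ | a
  · rcases hψx : ψ x with _ | b
    · rfl
    · exfalso
      cases b
      · have hx : x ∉ upperPolar Eᶜ (pre1 φ) := by simp [h0, pre0, hφx]
        obtain ⟨y, hy, hyx⟩ : ∃ y ∈ pre1 φ, E y x := by
          simpa [mem_upperPolar_iff] using hx
        exact absurd (hψ hyx (hext hy) hψx) (by decide)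
      · have hx : x ∉ lowerPolar Eᶜ (pre0 φ) := by simp [h1, pre1, hφx]
        obtain ⟨y, hy, hxy⟩ : ∃ y ∈ pre0 φ, E x y := by
          simpa [mem_lowerPolar_iff] using hx
        exact absurd (hψ hxy hψx (hext hy)) (by decide)
  · exact hext hφx

noncomputable def ofConcept (c : Concept X X Eᶜ) : PMap X := fun x =>
  if x ∈ c.extent then some true else if x ∈ c.intent then some false else none

lemma pre1_ofConcept (c : Concept X X Eᶜ) : pre1 (ofConcept c) = c.extent := by
  ext x
  by_cases hx : x ∈ c.extent <;> simp [pre1, ofConcept, hx]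

lemma pre0_ofConcept (hE : Reflexive E) (c : Concept X X Eᶜ) :
    pre0 (ofConcept c) = c.intent := by
  ext x
  by_cases hx : x ∈ c.extent
  · have hx' : x ∉ c.intent := fun hx' => c.rel_extent_intent hx hx' (hE x)
    simp [pre0, ofConcept, hx, hx']
  · by_cases hx' : x ∈ c.intent <;> simp [pre0, ofConcept, hx, hx']

lemma ofConcept_mem_MPE (hE : Reflexive E) (c : Concept X X Eᶜ) : ofConcept c ∈ MPE E := by
  rw [mem_MPE_iff hE, pre1_ofConcept, pre0_ofConcept hE]
  exact ⟨c.upperPolar_extent, c.lowerPolar_intent⟩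

noncomputable def mpeEquivConcept (hE : Reflexive E) :
    {φ : PMap X // φ ∈ MPE E} ≃ Concept X X Eᶜ where
  toFun φ :=
    ⟨pre1 φ.1, pre0 φ.1, upperPolar_pre1_of_mem_MPE hE φ.2, lowerPolar_pre0_of_mem_MPE hE φ.2⟩
  invFun c := ⟨ofConcept c, ofConcept_mem_MPE hE c⟩
  left_inv φ := by
    ext x : 2
    rcases h : φ.1 x with _ | _ | _ <;> simp [ofConcept, pre1, pre0, h]
  right_inv c := Concept.ext (pre1_ofConcept c)

end Concepts

/-- For a graph `(X,E)` (with `E` reflexive), the relation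
`φ ≤ ψ ↔ φ⁻¹(1) ⊆ ψ⁻¹(1)` on `MPE(X,2)` is a partial order making it a
complete lattice, in which the infimum of any family is the unique element of
`MPE(X,2)` whose preimage of `1` is the intersection of the preimages of `1`. -/
theorem stmt_0 {X : Type*} (E : X → X → Prop) (hE : Reflexive E) :
    IsPartialOrder {φ : PMap X // φ ∈ MPE E} (fun φ ψ => pre1 φ.1 ⊆ pre1 ψ.1) ∧
    ∃ inst : CompleteLattice {φ : PMap X // φ ∈ MPE E},
      (∀ φ ψ : {φ : PMap X // φ ∈ MPE E}, inst.le φ ψ ↔ pre1 φ.1 ⊆ pre1 ψ.1) ∧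
      ∀ S : Set {φ : PMap X // φ ∈ MPE E},
        pre1 (inst.sInf S).1 = ⋂ φ ∈ S, pre1 φ.1 ∧
        ∀ χ : {φ : PMap X // φ ∈ MPE E},
          pre1 χ.1 = ⋂ φ ∈ S, pre1 φ.1 → χ = inst.sInf S := by
  let e := mpeEquivConcept hE
  let inst : CompleteLattice {φ : PMap X // φ ∈ MPE E} := e.completeLattice
  have pre1_injective (φ ψ : {φ : PMap X // φ ∈ MPE E}) (h : pre1 φ.1 = pre1 ψ.1) : φ = ψ :=
    e.injective (Concept.ext h)
  have pre1_sInf (S : Set {φ : PMap X // φ ∈ MPE E}) :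
      pre1 (inst.sInf S).1 = ⋂ φ ∈ S, pre1 φ.1 := by
    change pre1 (ofConcept (⨅ φ ∈ S, e φ)) = _
    simp only [pre1_ofConcept, Concept.extent_iInf]
    rfl
  refine ⟨{ refl := fun _ => subset_rfl
            trans := fun _ _ _ => Set.Subset.trans
            antisymm := fun φ ψ h h' => pre1_injective φ ψ (h.antisymm h') },
    inst, fun _ _ => Iff.rfl,
    fun S => ⟨pre1_sInf S, fun χ hχ => pre1_injective _ _ (hχ.trans (pre1_sInf S).symm)⟩⟩

end CanExt
end

section
/- Let (X,E) be a graph (E a reflexive binary relation on X) and let φ ∈ MPE(X,2). Then (i) φ⁻¹(0) = {x ∈ X : there is no y ∈ φ⁻¹(1) with (y,x) ∈ E}, and (ii) φ⁻¹(1) = {x ∈ X : there is no y ∈ φ⁻¹(0) with (x,y) ∈ E}. -/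
namespace CanExt

open Classical

/-! An element `x` with no `1` below it can be sent to `0` without breaking `E`-preservation,
and reflexivity of `E` rules out `φ x = 1`; so sending `x` to `0` extends `φ`, and maximality
forces `φ x = 0`. Conversely an edge from a `1` to a `0` would violate `E`-preservation.
Dually for `φ⁻¹(1)`. -/

section Extension

variable {X : Type*} {E : X → X → Prop} {φ : PMap X}

lemma EPres.notMem_pre0_of_mem_pre1 (hφ : EPres E φ) {x y : X} (hxy : E x y)
    (hx : x ∈ pre1 φ) : y ∉ pre0 φ :=
  fun hy => absurd (hφ hxy hx hy) (by decide)

lemma EPres.update_false (hφ : EPres E φ) {x : X} (hx : ¬ ∃ y ∈ pre1 φ, E y x) :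
    EPres E (Function.update φ x (some false)) := by
  intro u v huv a b hu hv
  rcases eq_or_ne u x with rfl | hux
  · simp_all
  rw [Function.update_of_ne hux] at hu
  rcases eq_or_ne v x with rfl | hvx
  · cases a
    · exact Bool.false_le b
    · exact absurd ⟨u, hu, huv⟩ hx
  · exact hφ huv hu (by rwa [Function.update_of_ne hvx] at hv)

lemma EPres.update_true (hφ : EPres E φ) {x : X} (hx : ¬ ∃ y ∈ pre0 φ, E x y) :
    EPres E (Function.update φ x (some true)) := by
  intro u v huv a b hu hv
  rcases eq_or_ne v x with rfl | hvx
  · simp_all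
  rw [Function.update_of_ne hvx] at hv
  rcases eq_or_ne u x with rfl | hux
  · cases b
    · exact absurd ⟨v, hv, huv⟩ hx
    · exact Bool.le_true a
  · exact hφ huv (by rwa [Function.update_of_ne hux] at hu) hv

lemma pExt_update {x : X} {b : Bool} (hx : φ x ≠ some (!b)) :
    PExt (Function.update φ x (some b)) φ := by
  intro z a hz
  rcases eq_or_ne z x with rfl | hzx
  · cases a <;> cases b <;> simp_all
  · rwa [Function.update_of_ne hzx]

lemma apply_eq_of_mem_MPE (hφ : φ ∈ MPE E) {x : X} {b : Bool}
    (hupd : EPres E (Function.update φ x (some b))) (hx : φ x ≠ some (!b)) :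
    φ x = some b := by
  rw [← hφ.2 _ hupd (pExt_update hx), Function.update_self]

end Extension

/-- For a graph `(X,E)` (with `E` reflexive) and `φ ∈ MPE(X,2)`:
(i) `φ⁻¹(0) = {x : no y ∈ φ⁻¹(1) with (y,x) ∈ E}`;
(ii) `φ⁻¹(1) = {x : no y ∈ φ⁻¹(0) with (x,y) ∈ E}`. -/
theorem stmt_1 {X : Type*} (E : X → X → Prop) (hE : Reflexive E)
    (φ : PMap X) (hφ : φ ∈ MPE E) :
    pre0 φ = {x : X | ¬ ∃ y ∈ pre1 φ, E y x} ∧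
    pre1 φ = {x : X | ¬ ∃ y ∈ pre0 φ, E x y} := by
  refine ⟨Set.ext fun x => ⟨?_, fun hx => ?_⟩, Set.ext fun x => ⟨?_, fun hx => ?_⟩⟩
  · rintro hx ⟨y, hy, hyx⟩
    exact hφ.1.notMem_pre0_of_mem_pre1 hyx hy hx
  · exact apply_eq_of_mem_MPE hφ (hφ.1.update_false hx) fun h => hx ⟨x, h, hE x⟩
  · rintro hx ⟨y, hy, hxy⟩
    exact hφ.1.notMem_pre0_of_mem_pre1 hxy hx hy
  · exact apply_eq_of_mem_MPE hφ (hφ.1.update_true hx) fun h => hx ⟨x, h, hE x⟩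

end CanExt
end

section
/- Let (X,E) be a graph (E a reflexive binary relation on X) and let {φ_i : i ∈ I} ⊆ MPE(X,2). Then the partial maps e^∧ and e^∨ belong to MPE(X,2), and they extend the pointwise meet p^∧ and the pointwise join p^∨, respectively. -/
/-!
Write `A = ⋂ᵢ φᵢ⁻¹(1)`. The map `e^∧` sends `A` to `1` and everything not `E`-reachable from `A`
to `0`, so it is `E`-preserving. A point `x` where `e^∧` is undefined is reached from `A`, so no
extension sends it to `0`; and some `φᵢ` is undefined at `x`, so by maximality of `φᵢ` there is an
`E`-successor `z` of `x` with `φᵢ z = 0`, which `e^∧` sends to `0`, so no extension sends `x` to `1`.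
Negating values and reversing `E` turns `e^∨` and `p^∨` into `e^∧` and `p^∧`; reflexivity of `E` is
what makes this identification hold on `⋂ᵢ φᵢ⁻¹(0)`.
-/

namespace CanExt

open Classical

open Classical in
/-- The pointwise meet `p^∧` of a family of partial maps. -/
noncomputable def pMeet {X I : Type*} (φ : I → PMap X) : PMap X := fun x =>
  if x ∈ ⋂ i, pre1 (φ i) then some true
  else if x ∈ ⋃ i, pre0 (φ i) then some false
  else none

open Classical in
/-- The pointwise join `p^∨` of a family of partial maps. -/
noncomputable def pJoin {X I : Type*} (φ : I → PMap X) : PMap X := fun x =>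
  if x ∈ ⋃ i, pre1 (φ i) then some true
  else if x ∈ ⋂ i, pre0 (φ i) then some false
  else none

open Classical in
/-- The extension `e^∧` of the pointwise meet. -/
noncomputable def eMeet {X I : Type*} (E : X → X → Prop) (φ : I → PMap X) : PMap X := fun x =>
  if x ∈ ⋂ i, pre1 (φ i) then some true
  else if ¬ ∃ y ∈ ⋂ i, pre1 (φ i), E y x then some false
  else none

open Classical in
/-- The extension `e^∨` of the pointwise join. -/
noncomputable def eJoin {X I : Type*} (E : X → X → Prop) (φ : I → PMap X) : PMap X := fun x =>
  if ¬ ∃ y ∈ ⋂ i, pre0 (φ i), E x y then some true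
  else if x ∈ ⋂ i, pre0 (φ i) then some false
  else none

section Preserving

variable {X : Type*} {E : X → X → Prop}

theorem ePres_iff {φ : PMap X} :
    EPres E φ ↔ ∀ ⦃x y : X⦄, E x y → φ x = some true → φ y ≠ some false := by
  refine ⟨fun h x y hxy hx hy => absurd (h hxy hx hy) (by decide), fun h x y hxy a b hx hy => ?_⟩
  cases a
  · exact Bool.false_le b
  · cases b
    · exact absurd hy (h hxy hx)
    · exact le_rfl

theorem ePres_update_true {φ : PMap X} (hφ : EPres E φ) {x : X}
    (hx : ∀ z, E x z → φ z ≠ some false) : EPres E (Function.update φ x (some true)) := by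
  rw [ePres_iff] at hφ ⊢
  intro u v huv hu hv
  have hvx : v ≠ x := by rintro rfl; simp at hv
  rw [Function.update_of_ne hvx] at hv
  by_cases hux : u = x
  · subst hux
    exact hx v huv hv
  · rw [Function.update_of_ne hux] at hu
    exact hφ huv hu hv

/-- Otherwise `x ↦ 1` would extend `φ`. -/
theorem exists_rel_eq_some_false_of_eq_none {φ : PMap X} (hφ : φ ∈ MPE E) {x : X}
    (hx : φ x = none) : ∃ z, E x z ∧ φ z = some false := by
  by_contra! h
  have hext : PExt (Function.update φ x (some true)) φ := fun y a hy => by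
    rwa [Function.update_of_ne (by rintro rfl; simp [hx] at hy)]
  have := congrFun (hφ.2 _ (ePres_update_true hφ.1 h) hext) x
  simp [hx] at this

end Preserving

section Dual

variable {X : Type*} {E : X → X → Prop}

def dual (φ : PMap X) : PMap X := fun x => (φ x).map not

@[simp]
theorem dual_eq_some {φ : PMap X} {x : X} {a : Bool} : dual φ x = some a ↔ φ x = some (!a) := by
  cases h : φ x <;> cases a <;> simp [dual, h]

@[simp]
theorem dual_dual (φ : PMap X) : dual (dual φ) = φ := by
  funext x
  cases h : φ x <;> simp [dual, h]

@[simp]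
theorem pre1_dual (φ : PMap X) : pre1 (dual φ) = pre0 φ := by
  ext; simp [pre1, pre0]

@[simp]
theorem pre0_dual (φ : PMap X) : pre0 (dual φ) = pre1 φ := by
  ext; simp [pre1, pre0]

theorem EPres.dual {φ : PMap X} (hφ : EPres E φ) : EPres (flip E) (dual φ) := by
  rw [ePres_iff] at hφ ⊢
  intro x y hxy hx hy
  exact hφ hxy (dual_eq_some.1 hy) (dual_eq_some.1 hx)

theorem PExt.dual {ψ φ : PMap X} (h : PExt ψ φ) : PExt (dual ψ) (dual φ) :=
  fun _ _ hx => dual_eq_some.2 (h (dual_eq_some.1 hx))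

theorem dual_mem_MPE {φ : PMap X} (hφ : φ ∈ MPE E) : dual φ ∈ MPE (flip E) := by
  refine ⟨hφ.1.dual, fun ψ hψ hext => ?_⟩
  have := hφ.2 (dual ψ) hψ.dual (by simpa using hext.dual)
  rw [← this, dual_dual]

variable {I : Type*}

theorem eJoin_eq_dual_eMeet (hE : ∀ x, E x x) (φ : I → PMap X) :
    eJoin E φ = dual (eMeet (flip E) (dual ∘ φ)) := by
  funext x
  show _ = Option.map not (eMeet (flip E) (dual ∘ φ) x)
  simp only [eJoin, eMeet, Function.comp_apply, pre1_dual, flip]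
  split_ifs with h₁ _ h₃
  · rfl
  · rfl
  · exact (h₁ ⟨x, h₃, hE x⟩).elim
  · rfl

theorem pJoin_eq_dual_pMeet (φ : I → PMap X) : pJoin φ = dual (pMeet (dual ∘ φ)) := by
  funext x
  show _ = Option.map not (pMeet (dual ∘ φ) x)
  simp only [pJoin, pMeet, Function.comp_apply, pre1_dual, pre0_dual]
  split_ifs <;> simp_all [pre0, pre1]

end Dual

section Meet

variable {X I : Type*} {E : X → X → Prop} {φ : I → PMap X} {x : X}

theorem eMeet_eq_some_true : eMeet E φ x = some true ↔ x ∈ ⋂ i, pre1 (φ i) := by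
  unfold eMeet
  split_ifs <;> simp_all

theorem eMeet_eq_some_false :
    eMeet E φ x = some false ↔ x ∉ ⋂ i, pre1 (φ i) ∧ ¬ ∃ y ∈ ⋂ i, pre1 (φ i), E y x := by
  unfold eMeet
  split_ifs <;> simp_all

theorem eMeet_eq_none :
    eMeet E φ x = none ↔ x ∉ ⋂ i, pre1 (φ i) ∧ ∃ y ∈ ⋂ i, pre1 (φ i), E y x := by
  unfold eMeet
  split_ifs <;> simp_all

theorem eMeet_eq_some_false_of_eq_some_false {i : I} (hφ : EPres E (φ i))
    (hx : φ i x = some false) : eMeet E φ x = some false := by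
  rw [ePres_iff] at hφ
  refine eMeet_eq_some_false.2 ⟨fun hA => ?_, fun ⟨y, hy, hyx⟩ => hφ hyx (Set.mem_iInter.1 hy i) hx⟩
  have hx' : φ i x = some true := Set.mem_iInter.1 hA i
  simp [hx'] at hx

theorem ePres_eMeet : EPres E (eMeet E φ) :=
  ePres_iff.2 fun x _ hxy hx hy => (eMeet_eq_some_false.1 hy).2 ⟨x, eMeet_eq_some_true.1 hx, hxy⟩

theorem pExt_eMeet_pMeet (hφ : ∀ i, EPres E (φ i)) : PExt (eMeet E φ) (pMeet φ) := by
  intro x a hx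
  unfold pMeet at hx
  split_ifs at hx with hA h0 <;> cases hx
  · exact eMeet_eq_some_true.2 hA
  · obtain ⟨i, hi⟩ := Set.mem_iUnion.1 h0
    exact eMeet_eq_some_false_of_eq_some_false (hφ i) hi

theorem eMeet_mem_MPE (hφ : ∀ i, φ i ∈ MPE E) : eMeet E φ ∈ MPE E := by
  refine ⟨ePres_eMeet, fun ψ hψ hext => funext fun x => ?_⟩
  cases hx : eMeet E φ x with
  | some a => exact hext hx
  | none =>
    obtain ⟨hxA, y, hyA, hyx⟩ := eMeet_eq_none.1 hx
    have hψy : ψ y = some true := hext (eMeet_eq_some_true.2 hyA)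
    rw [ePres_iff] at hψ
    cases hψx : ψ x with
    | none => rfl
    | some b =>
      exfalso
      cases b
      · exact hψ hyx hψy hψx
      · obtain ⟨i, hi⟩ : ∃ i, x ∉ pre1 (φ i) := by simpa using hxA
        have hiy : φ i y = some true := Set.mem_iInter.1 hyA i
        have hix : φ i x = none := by
          cases h : φ i x with
          | none => rfl
          | some c =>
            cases c
            · exact absurd h (ePres_iff.1 (hφ i).1 hyx hiy)
            · exact absurd h hi
        obtain ⟨z, hxz, hz⟩ := exists_rel_eq_some_false_of_eq_none (hφ i) hix
        exact hψ hxz hψx (hext (eMeet_eq_some_false_of_eq_some_false (hφ i).1 hz))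

end Meet

/-- For a graph `(X,E)` (with `E` reflexive) and a family
`{φ_i : i ∈ I} ⊆ MPE(X,2)`, the maps `e^∧` and `e^∨` belong to `MPE(X,2)` and
extend the pointwise meet `p^∧` and the pointwise join `p^∨`, respectively. -/
theorem stmt_2 {X I : Type*} (E : X → X → Prop) (hE : Reflexive E)
    (φ : I → PMap X) (hφ : ∀ i : I, φ i ∈ MPE E) :
    eMeet E φ ∈ MPE E ∧ eJoin E φ ∈ MPE E ∧
    PExt (eMeet E φ) (pMeet φ) ∧ PExt (eJoin E φ) (pJoin φ) := by
  have hφdual : ∀ i, (dual ∘ φ) i ∈ MPE (flip E) := fun i => dual_mem_MPE (hφ i)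
  rw [eJoin_eq_dual_eMeet hE, pJoin_eq_dual_pMeet]
  exact ⟨eMeet_mem_MPE hφ, dual_mem_MPE (eMeet_mem_MPE hφdual),
    pExt_eMeet_pMeet fun i => (hφ i).1, (pExt_eMeet_pMeet fun i => (hφdual i).1).dual⟩

end CanExt
end

section
/- Let (X,E,τ) be a graph with topology whose topology τ is T₁, and let (X,E) be its untopologised counterpart. Then every maximal partial morphism from (X,E,τ) to 2_τ is a maximal partial E-preserving map from (X,E) to 2; that is, MPM((X,E,τ),2_τ) ⊆ MPE(X,2). -/
namespace CanExt

open Classical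

/-!
If an `E`-preserving `ψ` properly extends a maximal partial morphism `φ`, pick `x` with `ψ x`
defined and `φ x` not. Adding `x ↦ ψ x` to `φ` stays `E`-preserving, since the result still lies
below `ψ`, and each fibre of `φ` gains at most the point `x`, which is closed in a `T₁` space. So
this is a partial morphism properly extending `φ`, contradicting maximality.
-/

section PartialMaps

open Function

theorem _root_.IsClosed.preimage_update_singleton {α β : Type*} [TopologicalSpace α] [T1Space α]
    [DecidableEq α] {f : α → β} {x : α} {c : β} (hf : IsClosed (f ⁻¹' {c})) (hx : f x ≠ c)
    (v : β) : IsClosed (update f x v ⁻¹' {c}) := by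
  by_cases hv : v = c
  · convert (isClosed_singleton : IsClosed {x}).union hf using 1
    ext y
    rcases eq_or_ne y x with rfl | hyx <;> simp [*]
  · convert hf using 1
    ext y
    rcases eq_or_ne y x with rfl | hyx <;> simp [*]

variable {X : Type*} {E : X → X → Prop} {φ ψ : PMap X} {x : X} {a : Bool}

theorem EPres.of_pExt (hψ : EPres E ψ) (hext : PExt ψ φ) : EPres E φ :=
  fun _ _ hyz _ _ hy hz => hψ hyz (hext hy) (hext hz)

theorem PExt.exists_eq_none_of_ne (hext : PExt ψ φ) (hne : ψ ≠ φ) :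
    ∃ x a, φ x = none ∧ ψ x = some a := by
  contrapose! hne
  funext y
  cases hφy : φ y with
  | none => cases hψy : ψ y with
    | none => rfl
    | some a => exact absurd hψy (hne y a hφy)
  | some a => exact hext hφy

theorem pExt_update_of_eq_none (hx : φ x = none) (a : Bool) : PExt (update φ x (some a)) φ := by
  intro y b hy
  have hyx : y ≠ x := by
    rintro rfl
    simp [hx] at hy
  rwa [update_of_ne hyx]

theorem PExt.update (hext : PExt ψ φ) (hψx : ψ x = some a) : PExt ψ (update φ x (some a)) := by
  intro y b hy
  rcases eq_or_ne y x with rfl | hyx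
  · rw [update_self] at hy
    rwa [← hy]
  · exact hext (by rwa [update_of_ne hyx] at hy)

theorem PMorphT.update {t : TopologicalSpace X} [T1Space X] (hφ : PMorphT E t φ)
    (hψ : EPres E ψ) (hext : PExt ψ φ) (hx : φ x = none) (hψx : ψ x = some a) :
    PMorphT E t (update φ x (some a)) :=
  ⟨hψ.of_pExt (hext.update hψx),
    hφ.2.1.preimage_update_singleton (by simp [hx]) _,
    hφ.2.2.preimage_update_singleton (by simp [hx]) _⟩

end PartialMaps

theorem stmt_3_general {X : Type*} (E : X → X → Prop)
    (t : TopologicalSpace X) (hT1 : @T1Space X t)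
    (φ : PMap X) (hφ : φ ∈ MPM E t) : φ ∈ MPE E := by
  obtain ⟨hφmorph, hφmax⟩ := hφ
  refine ⟨hφmorph.1, fun ψ hψ hext => ?_⟩
  by_contra hne
  obtain ⟨x, a, hx, hψx⟩ := hext.exists_eq_none_of_ne hne
  have hupd := hφmax _ (hφmorph.update hψ hext hx hψx) (pExt_update_of_eq_none hx a)
  simpa [hx] using congrFun hupd x

/-- Let `(X,E,t)` be a graph with topology whose topology is
`T₁`. Then every maximal partial morphism from `(X,E,t)` to `2_τ` is a maximal
partial `E`-preserving map from `(X,E)` to `2`: `MPM((X,E,t),2_τ) ⊆ MPE(X,2)`. -/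
theorem stmt_3 {X : Type*} (E : X → X → Prop) (hE : Reflexive E)
    (t : TopologicalSpace X) (hT1 : @T1Space X t)
    (φ : PMap X) (hφ : φ ∈ MPM E t) : φ ∈ MPE E :=
  stmt_3_general E t hT1 φ hφ

end CanExt
end

section
/- Let L be a bounded lattice, X = D♭(L), φ ∈ MPE(X,2) and f ∈ MPH(L,2_B). Then (i) if f ∉ φ⁻¹(0) then there exists g ∈ φ⁻¹(1) with f ≤₂ g, and (ii) if f ∉ φ⁻¹(1) then there exists g ∈ φ⁻¹(0) with f ≤₁ g. -/
namespace CanExt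

open Classical

/-! If `φ(f) ≠ 0`, maximality of `φ` yields `g` with `φ(g) = 1` and `(g, f) ∈ E`: otherwise
`φ` could be extended by `f ↦ 0`. As `g` and `f` are maximal, `g⁻¹(1)` is a filter and `f⁻¹(0)` an
ideal, disjoint because `(g, f) ∈ E`; the partial homomorphism they define extends by Zorn's lemma
to an MPH `k` with `g ≤₁ k` and `f ≤₂ k`. Every `E`-successor of `k` is then an `E`-successor of
`g`, so `k` cannot be sent to `0`, nor left undefined, by the maximal map `φ`. Part (ii) is dual. -/

section PartialMaps

variable {X : Type*}

noncomputable def ofSets (A B : Set X) : PMap X :=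
  fun x => if x ∈ A then some true else if x ∈ B then some false else none

lemma ofSets_eq_some {A B : Set X} (hAB : Disjoint A B) {x : X} {b : Bool} :
    ofSets A B x = some b ↔ x ∈ cond b A B := by
  unfold ofSets
  by_cases hA : x ∈ A
  · cases b <;> simp [hA, Set.disjoint_left.1 hAB hA]
  · by_cases hB : x ∈ B <;> cases b <;> simp [hA, hB]

lemma pre1_ofSets {A B : Set X} (hAB : Disjoint A B) : pre1 (ofSets A B) = A :=
  Set.ext fun _ => ofSets_eq_some hAB

lemma pre0_ofSets {A B : Set X} (hAB : Disjoint A B) : pre0 (ofSets A B) = B :=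
  Set.ext fun _ => ofSets_eq_some hAB

lemma pext_iff {f g : PMap X} : PExt g f ↔ pre1 f ⊆ pre1 g ∧ pre0 f ⊆ pre0 g := by
  refine ⟨fun h => ⟨fun _ hx => h hx, fun _ hx => h hx⟩, fun h x b hx => ?_⟩
  cases b
  · exact h.2 hx
  · exact h.1 hx

lemma pext_ofSets {A B : Set X} {g : PMap X} (hAB : Disjoint A B) (h1 : pre1 g ⊆ A)
    (h0 : pre0 g ⊆ B) : PExt (ofSets A B) g := by
  rw [pext_iff, pre1_ofSets hAB, pre0_ofSets hAB]
  exact ⟨h1, h0⟩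

lemma PExt.refl (f : PMap X) : PExt f f := fun _ _ h => h

lemma PExt.trans {f g k : PMap X} (hfg : PExt f g) (hgk : PExt g k) : PExt f k :=
  fun _ _ h => hfg (hgk h)

lemma PExt.antisymm {f g : PMap X} (hfg : PExt f g) (hgf : PExt g f) : f = g := by
  funext x
  cases hg : g x with
  | none => cases hf : f x with
    | none => rfl
    | some b => simp [hgf hf] at hg
  | some b => exact hfg hg

noncomputable def directedUnion (s : Set (PMap X)) : PMap X :=
  ofSets (⋃ g ∈ s, pre1 g) (⋃ g ∈ s, pre0 g)

section Directed

variable {s : Set (PMap X)}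

lemma disjoint_biUnion_pre (hs : DirectedOn (fun f g => PExt g f) s) :
    Disjoint (⋃ g ∈ s, pre1 g) (⋃ g ∈ s, pre0 g) := by
  refine Set.disjoint_left.2 fun x hx₁ hx₀ => ?_
  simp only [Set.mem_iUnion] at hx₁ hx₀
  obtain ⟨g₁, hg₁, hx₁⟩ := hx₁
  obtain ⟨g₀, hg₀, hx₀⟩ := hx₀
  obtain ⟨g, -, h₁, h₀⟩ := hs g₁ hg₁ g₀ hg₀
  simpa using (h₁ hx₁).symm.trans (h₀ hx₀)

lemma pext_directedUnion (hs : DirectedOn (fun f g => PExt g f) s) {g : PMap X} (hg : g ∈ s) :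
    PExt (directedUnion s) g :=
  pext_ofSets (disjoint_biUnion_pre hs) (Set.subset_biUnion_of_mem (u := pre1) hg)
    (Set.subset_biUnion_of_mem (u := pre0) hg)

lemma exists_of_directedUnion_eq_some (hs : DirectedOn (fun f g => PExt g f) s) {x : X}
    {b : Bool} (h : directedUnion s x = some b) : ∃ g ∈ s, g x = some b := by
  rw [directedUnion, ofSets_eq_some (disjoint_biUnion_pre hs)] at h
  cases b <;> simpa [pre0, pre1] using h

end Directed

lemma ErelP.of_le1_left {g h k : PMap X} (hgk : le1 g k) (hkh : ErelP k h) : ErelP g h := by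
  intro x a b hga hhb
  cases a
  · exact Bool.false_le b
  · exact hkh (hgk hga) hhb

lemma ErelP.of_le2_right {g h k : PMap X} (hhk : le2 h k) (hgk : ErelP g k) : ErelP g h := by
  intro x a b hga hhb
  cases b
  · exact hgk hga (hhk hhb)
  · exact Bool.le_true a

end PartialMaps

section MaximalPreserving

variable {X : Type*} {E : X → X → Prop} {φ : PMap X}

lemma pext_update_of_eq_none {v : X} (hv : φ v = none) (b : Option Bool) :
    PExt (Function.update φ v b) φ := by
  intro x a hx
  rw [Function.update_of_ne (by rintro rfl; simp [hv] at hx)]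
  exact hx

lemma ePres_update_false (hφ : EPres E φ) {v : X} (hv : ∀ x ∈ pre1 φ, ¬ E x v) :
    EPres E (Function.update φ v (some false)) := by
  intro x y hxy a b hx hy
  rcases eq_or_ne x v with rfl | hxv
  · rw [Function.update_self, Option.some.injEq] at hx
    exact hx ▸ Bool.false_le b
  rw [Function.update_of_ne hxv] at hx
  rcases eq_or_ne y v with rfl | hyv
  · cases a
    · exact Bool.false_le b
    · exact absurd hxy (hv x hx)
  · rw [Function.update_of_ne hyv] at hy
    exact hφ hxy hx hy

lemma ePres_update_true_s5 (hφ : EPres E φ) {v : X} (hv : ∀ y ∈ pre0 φ, ¬ E v y) :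
    EPres E (Function.update φ v (some true)) := by
  intro x y hxy a b hx hy
  rcases eq_or_ne y v with rfl | hyv
  · rw [Function.update_self, Option.some.injEq] at hy
    exact hy ▸ Bool.le_true a
  rw [Function.update_of_ne hyv] at hy
  rcases eq_or_ne x v with rfl | hxv
  · cases b
    · exact absurd hxy (hv y hy)
    · exact Bool.le_true a
  · rw [Function.update_of_ne hxv] at hx
    exact hφ hxy hx hy

variable [Std.Refl E]

lemma MPE.exists_pre1_rel (hφ : φ ∈ MPE E) {v : X} (hv : v ∉ pre0 φ) :
    ∃ x ∈ pre1 φ, E x v := by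
  rcases hφv : φ v with _ | _ | _
  · by_contra! hno
    have := hφ.2 _ (ePres_update_false hφ.1 hno) (pext_update_of_eq_none hφv _)
    simpa [hφv] using congrFun this v
  · exact absurd hφv hv
  · exact ⟨v, hφv, refl_of E v⟩

lemma MPE.exists_pre0_rel (hφ : φ ∈ MPE E) {v : X} (hv : v ∉ pre1 φ) :
    ∃ y ∈ pre0 φ, E v y := by
  rcases hφv : φ v with _ | _ | _
  · by_contra! hno
    have := hφ.2 _ (ePres_update_true_s5 hφ.1 hno) (pext_update_of_eq_none hφv _)
    simpa [hφv] using congrFun this v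
  · exact ⟨v, hφv, refl_of E v⟩
  · exact absurd hφv hv

lemma MPE.mem_pre1_of_forall_rel (hφ : φ ∈ MPE E) {x y : X}
    (hx : x ∈ pre1 φ) (hxy : ∀ z, E y z → E x z) : y ∈ pre1 φ := by
  by_contra hy
  obtain ⟨z, hz, hyz⟩ := MPE.exists_pre0_rel hφ hy
  exact absurd (hφ.1 (hxy z hyz) hx hz) (by decide)

lemma MPE.mem_pre0_of_forall_rel (hφ : φ ∈ MPE E) {x y : X}
    (hx : x ∈ pre0 φ) (hxy : ∀ z, E z y → E z x) : y ∈ pre0 φ := by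
  by_contra hy
  obtain ⟨z, hz, hzy⟩ := MPE.exists_pre1_rel hφ hy
  exact absurd (hφ.1 (hxy z hzy) hz hx) (by decide)

end MaximalPreserving

section Lattice

variable {L : Type*} [Lattice L] [BoundedOrder L]

lemma PHom.inf_true {k : PMap L} (hk : PHom L k) {a b : L} (ha : k a = some true)
    (hb : k b = some true) : k (a ⊓ b) = some true :=
  (hk.2.2 ha hb).1

lemma PHom.sup_false {k : PMap L} (hk : PHom L k) {a b : L} (ha : k a = some false)
    (hb : k b = some false) : k (a ⊔ b) = some false :=
  (hk.2.2 ha hb).2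

lemma PHom.not_le_of_true_of_false {k : PMap L} (hk : PHom L k) {a b : L}
    (ha : k a = some true) (hb : k b = some false) : ¬ a ≤ b := by
  intro hab
  have := (hk.2.2 ha hb).2
  rw [sup_eq_right.2 hab, hb] at this
  simp at this

lemma PHom.isLatFilter_upperClosure {k : PMap L} (hk : PHom L k) :
    IsLatFilter L (upperClosure (pre1 k)) :=
  ⟨⟨⊤, ⊤, hk.2.1, le_rfl⟩, fun _ _ ha hab => (upperClosure _).upper hab ha,
    fun _ _ ⟨u, hu, hua⟩ ⟨v, hv, hvb⟩ => ⟨u ⊓ v, hk.inf_true hu hv, inf_le_inf hua hvb⟩⟩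

lemma PHom.isLatIdeal_lowerClosure {k : PMap L} (hk : PHom L k) :
    IsLatIdeal L (lowerClosure (pre0 k)) :=
  ⟨⟨⊥, ⊥, hk.1, le_rfl⟩, fun _ _ ha hba => (lowerClosure _).lower hba ha,
    fun _ _ ⟨u, hu, hau⟩ ⟨v, hv, hbv⟩ => ⟨u ⊔ v, hk.sup_false hu hv, sup_le_sup hau hbv⟩⟩

lemma PHom.disjoint_closure {k : PMap L} (hk : PHom L k) :
    Disjoint (upperClosure (pre1 k) : Set L) (lowerClosure (pre0 k)) :=
  Set.disjoint_left.2 fun _ ⟨_, hu, hux⟩ ⟨_, hv, hxv⟩ =>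
    hk.not_le_of_true_of_false hu hv (hux.trans hxv)

lemma phom_ofSets {F I : Set L} (hF : IsLatFilter L F) (hI : IsLatIdeal L I)
    (hFI : Disjoint F I) : PHom L (ofSets F I) := by
  obtain ⟨a, ha⟩ := hF.1
  obtain ⟨b, hb⟩ := hI.1
  refine ⟨(ofSets_eq_some hFI).2 (hI.2.1 hb bot_le), (ofSets_eq_some hFI).2 (hF.2.1 ha le_top),
    fun a b x y ha hb => ?_⟩
  simp only [ofSets_eq_some hFI] at ha hb ⊢
  cases x <;> cases y <;> simp only [cond_true, cond_false] at ha hb ⊢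
  · exact ⟨hI.2.1 ha inf_le_left, hI.2.2 ha hb⟩
  · exact ⟨hI.2.1 ha inf_le_left, hF.2.1 hb le_sup_right⟩
  · exact ⟨hI.2.1 hb inf_le_right, hF.2.1 ha le_sup_left⟩
  · exact ⟨hF.2.2 ha hb, hF.2.1 ha le_sup_left⟩

lemma phom_directedUnion {s : Set (PMap L)} (hs : DirectedOn (fun f g => PExt g f) s)
    (hne : s.Nonempty) (hphom : ∀ g ∈ s, PHom L g) : PHom L (directedUnion s) := by
  obtain ⟨g₀, hg₀⟩ := hne
  refine ⟨pext_directedUnion hs hg₀ (hphom g₀ hg₀).1,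
    pext_directedUnion hs hg₀ (hphom g₀ hg₀).2.1, fun a b x y ha hb => ?_⟩
  obtain ⟨g₁, hg₁, ha⟩ := exists_of_directedUnion_eq_some hs ha
  obtain ⟨g₂, hg₂, hb⟩ := exists_of_directedUnion_eq_some hs hb
  obtain ⟨g, hg, h₁, h₂⟩ := hs g₁ hg₁ g₂ hg₂
  obtain ⟨hinf, hsup⟩ := (hphom g hg).2.2 (h₁ ha) (h₂ hb)
  exact ⟨pext_directedUnion hs hg hinf, pext_directedUnion hs hg hsup⟩

lemma exists_mph_pext {h : PMap L} (hh : PHom L h) : ∃ k ∈ MPHset L, PExt k h := by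
  let T := {g : PMap L // PHom L g ∧ PExt g h}
  let r : T → T → Prop := fun a b => PExt b.1 a.1
  have : Nonempty T := ⟨⟨h, hh, PExt.refl h⟩⟩
  have : Std.Refl r := ⟨fun a => PExt.refl a.1⟩
  have hbound : ∀ c, IsChain r c → c.Nonempty → ∃ ub, ∀ a ∈ c, r a ub := by
    rintro c hc ⟨a₀, ha₀⟩
    have hs : DirectedOn (fun f g => PExt g f) (Subtype.val '' c) :=
      directedOn_image.2 hc.directedOn
    have hphom : ∀ g ∈ Subtype.val '' c, PHom L g := by
      rintro _ ⟨a, -, rfl⟩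
      exact a.2.1
    exact ⟨⟨directedUnion (Subtype.val '' c), phom_directedUnion hs ⟨a₀, a₀, ha₀, rfl⟩ hphom,
      (pext_directedUnion hs ⟨a₀, ha₀, rfl⟩).trans a₀.2.2⟩,
      fun a ha => pext_directedUnion hs ⟨a, ha, rfl⟩⟩
  obtain ⟨m, hm⟩ := exists_maximal_of_nonempty_chains_bounded hbound fun hab hbc => hbc.trans hab
  exact ⟨m.1, ⟨m.2.1, fun g hg hgm => hgm.antisymm (hm ⟨g, hg, hgm.trans m.2.2⟩ hgm)⟩, m.2.2⟩

lemma MPHset.ofSets_closure_eq {k : PMap L} (hk : k ∈ MPHset L) :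
    ofSets (upperClosure (pre1 k)) (lowerClosure (pre0 k)) = k :=
  hk.2 _ (phom_ofSets hk.1.isLatFilter_upperClosure hk.1.isLatIdeal_lowerClosure
    hk.1.disjoint_closure)
    (pext_ofSets hk.1.disjoint_closure subset_upperClosure subset_lowerClosure)

lemma MPHset.isLatFilter_pre1 {k : PMap L} (hk : k ∈ MPHset L) : IsLatFilter L (pre1 k) := by
  have := congrArg pre1 (MPHset.ofSets_closure_eq hk)
  rw [pre1_ofSets hk.1.disjoint_closure] at this
  exact this ▸ hk.1.isLatFilter_upperClosure

lemma MPHset.isLatIdeal_pre0 {k : PMap L} (hk : k ∈ MPHset L) : IsLatIdeal L (pre0 k) := by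
  have := congrArg pre0 (MPHset.ofSets_closure_eq hk)
  rw [pre0_ofSets hk.1.disjoint_closure] at this
  exact this ▸ hk.1.isLatIdeal_lowerClosure

lemma exists_mph_le1_le2 {g f : PMap L} (hg : g ∈ MPHset L) (hf : f ∈ MPHset L)
    (hgf : ErelP g f) : ∃ k : MPHsub L, le1 g k.1 ∧ le2 f k.1 := by
  have hd : Disjoint (pre1 g) (pre0 f) :=
    Set.disjoint_left.2 fun _ hx hx' => absurd (hgf hx hx') (by decide)
  obtain ⟨k, hk, hext⟩ :=
    exists_mph_pext (phom_ofSets (MPHset.isLatFilter_pre1 hg) (MPHset.isLatIdeal_pre0 hf) hd)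
  rw [pext_iff, pre1_ofSets hd, pre0_ofSets hd] at hext
  exact ⟨⟨k, hk⟩, hext⟩

instance : Std.Refl (EM L) :=
  ⟨fun _ _ _ _ ha hb => (Option.some.inj (ha.symm.trans hb)).le⟩

end Lattice

/-- Let `L` be a bounded lattice, `X = D♭(L)`,
`φ ∈ MPE(X,2)` and `f ∈ MPH(L,2_B)`. Then (i) if `f ∉ φ⁻¹(0)` there is
`g ∈ φ⁻¹(1)` with `f ≤₂ g`; (ii) if `f ∉ φ⁻¹(1)` there is `g ∈ φ⁻¹(0)` with
`f ≤₁ g`. -/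
theorem stmt_5 (L : Type*) [Lattice L] [BoundedOrder L]
    (φ : PMap (MPHsub L)) (hφ : φ ∈ MPE (EM L)) (f : MPHsub L) :
    (f ∉ pre0 φ → ∃ g ∈ pre1 φ, le2 f.1 g.1) ∧
    (f ∉ pre1 φ → ∃ g ∈ pre0 φ, le1 f.1 g.1) := by
  refine ⟨fun hf => ?_, fun hf => ?_⟩
  · obtain ⟨g, hg, hgf⟩ := MPE.exists_pre1_rel hφ hf
    obtain ⟨k, hgk, hfk⟩ := exists_mph_le1_le2 g.2 f.2 hgf
    exact ⟨k, MPE.mem_pre1_of_forall_rel hφ hg fun _ => ErelP.of_le1_left hgk, hfk⟩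
  · obtain ⟨h, hh, hfh⟩ := MPE.exists_pre0_rel hφ hf
    obtain ⟨k, hfk, hhk⟩ := exists_mph_le1_le2 f.2 h.2 hfh
    exact ⟨k, MPE.mem_pre0_of_forall_rel hφ hh fun _ => ErelP.of_le2_right hhk, hfk⟩

end CanExt
end
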